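/- In $U$ the following four identities hold: $[e_1,F_{12}]=-\Delta\,\omega_1 f_2$, \ $[e_2,F_{12}]=f_1\omega_2'$, \ $[E_{12},f_1]=-\Delta\, e_2\omega_1'$, \ $[E_{12},f_2]=\omega_2 e_1$. -/
import Mathlib


noncomputable section

set_option maxHeartbeats 1000000

open MvPolynomial

/-- The field `K = ℚ(r,s)` of rational functions in two indeterminates over `ℚ`. -/
abbrev K : Type := FractionRing (MvPolynomial (Fin 2) ℚ)

/-- The first indeterminate `r`. -/
def r : K := algebraMap (MvPolynomial (Fin 2) ℚ) K (X 0)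

/-- The second indeterminate `s`. -/
def s : K := algebraMap (MvPolynomial (Fin 2) ℚ) K (X 1)

/-- `Δ = r² + rs + s²`. -/
def Δ : K := r ^ 2 + r * s + s ^ 2

/-- Generators of the two-parameter quantum group `U_{r,s}(G₂)` inside an associative unital
`K`-algebra `U`, together with the defining relations (G1)–(G6). -/
structure G2 (U : Type*) [Ring U] [Algebra K U] where
  e1 : U
  e2 : U
  f1 : U
  f2 : U
  ω1 : Uˣ
  ω2 : Uˣ
  ω1' : Uˣ
  ω2' : Uˣ
  /- (G1) : the `ω`'s pairwise commute. -/
  G1_a : ω1 * ω2 = ω2 * ω1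
  G1_b : ω1 * ω1' = ω1' * ω1
  G1_c : ω1 * ω2' = ω2' * ω1
  G1_d : ω2 * ω1' = ω1' * ω2
  G1_e : ω2 * ω2' = ω2' * ω2
  G1_f : ω1' * ω2' = ω2' * ω1'
  /- (G2) -/
  G2_a : (ω1 : U) * e1 * ((ω1⁻¹ : Uˣ) : U) = (r * s⁻¹) • e1
  G2_b : (ω1 : U) * f1 * ((ω1⁻¹ : Uˣ) : U) = (r⁻¹ * s) • f1
  G2_c : (ω1 : U) * e2 * ((ω1⁻¹ : Uˣ) : U) = (s ^ 3) • e2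
  G2_d : (ω1 : U) * f2 * ((ω1⁻¹ : Uˣ) : U) = (s ^ 3)⁻¹ • f2
  G2_e : (ω2 : U) * e1 * ((ω2⁻¹ : Uˣ) : U) = (r ^ 3)⁻¹ • e1
  G2_f : (ω2 : U) * f1 * ((ω2⁻¹ : Uˣ) : U) = (r ^ 3) • f1
  G2_g : (ω2 : U) * e2 * ((ω2⁻¹ : Uˣ) : U) = (r ^ 3 * (s ^ 3)⁻¹) • e2
  G2_h : (ω2 : U) * f2 * ((ω2⁻¹ : Uˣ) : U) = ((r ^ 3)⁻¹ * s ^ 3) • f2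
  /- (G3) -/
  G3_a : (ω1' : U) * e1 * ((ω1'⁻¹ : Uˣ) : U) = (r⁻¹ * s) • e1
  G3_b : (ω1' : U) * f1 * ((ω1'⁻¹ : Uˣ) : U) = (r * s⁻¹) • f1
  G3_c : (ω1' : U) * e2 * ((ω1'⁻¹ : Uˣ) : U) = (r ^ 3) • e2
  G3_d : (ω1' : U) * f2 * ((ω1'⁻¹ : Uˣ) : U) = (r ^ 3)⁻¹ • f2
  G3_e : (ω2' : U) * e1 * ((ω2'⁻¹ : Uˣ) : U) = (s ^ 3)⁻¹ • e1
  G3_f : (ω2' : U) * f1 * ((ω2'⁻¹ : Uˣ) : U) = (s ^ 3) • f1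
  G3_g : (ω2' : U) * e2 * ((ω2'⁻¹ : Uˣ) : U) = ((r ^ 3)⁻¹ * s ^ 3) • e2
  G3_h : (ω2' : U) * f2 * ((ω2'⁻¹ : Uˣ) : U) = (r ^ 3 * (s ^ 3)⁻¹) • f2
  /- (G4) -/
  G4_a : e1 * f1 - f1 * e1 = (r - s)⁻¹ • ((ω1 : U) - (ω1' : U))
  G4_b : e2 * f2 - f2 * e2 = (r ^ 3 - s ^ 3)⁻¹ • ((ω2 : U) - (ω2' : U))
  G4_c : e1 * f2 = f2 * e1
  G4_d : e2 * f1 = f1 * e2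
  /- (G5) -/
  G5_a : e2 ^ 2 * e1 - ((r ^ 3)⁻¹ + (s ^ 3)⁻¹) • (e2 * e1 * e2)
      + ((r * s) ^ 3)⁻¹ • (e1 * e2 ^ 2) = 0
  G5_b : e1 ^ 4 * e2 - ((r + s) * (r ^ 2 + s ^ 2)) • (e1 ^ 3 * e2 * e1)
      + (r * s * (r ^ 2 + s ^ 2) * (r ^ 2 + r * s + s ^ 2)) • (e1 ^ 2 * e2 * e1 ^ 2)
      - ((r * s) ^ 3 * (r + s) * (r ^ 2 + s ^ 2)) • (e1 * e2 * e1 ^ 3)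
      + ((r * s) ^ 6) • (e2 * e1 ^ 4) = 0
  /- (G6) -/
  G6_a : f1 * f2 ^ 2 - ((r ^ 3)⁻¹ + (s ^ 3)⁻¹) • (f2 * f1 * f2)
      + ((r * s) ^ 3)⁻¹ • (f2 ^ 2 * f1) = 0
  G6_b : f2 * f1 ^ 4 - ((r + s) * (r ^ 2 + s ^ 2)) • (f1 * f2 * f1 ^ 3)
      + (r * s * (r ^ 2 + s ^ 2) * (r ^ 2 + r * s + s ^ 2)) • (f1 ^ 2 * f2 * f1 ^ 2)
      - ((r * s) ^ 3 * (r + s) * (r ^ 2 + s ^ 2)) • (f1 ^ 3 * f2 * f1)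
      + ((r * s) ^ 6) • (f1 ^ 4 * f2) = 0

namespace G2

variable {U : Type*} [Ring U] [Algebra K U]

/-- The quantum root vector `E₁₂ = e₁e₂ - s³e₂e₁`. -/
def E12 (d : G2 U) : U := d.e1 * d.e2 - (s ^ 3) • (d.e2 * d.e1)

/-- The quantum root vector `F₁₂ = f₂f₁ - r³f₁f₂`. -/
def F12 (d : G2 U) : U := d.f2 * d.f1 - (r ^ 3) • (d.f1 * d.f2)

/-- The quantum root vector `E₁₁₂ = e₁E₁₂ - rs²E₁₂e₁`. -/
def E112 (d : G2 U) : U := d.e1 * d.E12 - (r * s ^ 2) • (d.E12 * d.e1)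

/-- The quantum root vector `F₁₁₂ = F₁₂f₁ - r²sf₁F₁₂`. -/
def F112 (d : G2 U) : U := d.F12 * d.f1 - (r ^ 2 * s) • (d.f1 * d.F12)

/-- The quantum root vector `E₁₁₁₂ = e₁E₁₁₂ - r²sE₁₁₂e₁`. -/
def E1112 (d : G2 U) : U := d.e1 * d.E112 - (r ^ 2 * s) • (d.E112 * d.e1)

/-- The quantum root vector `F₁₁₁₂ = F₁₁₂f₁ - rs²f₁F₁₁₂`. -/
def F1112 (d : G2 U) : U := d.F112 * d.f1 - (r * s ^ 2) • (d.f1 * d.F112)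

/-- The quantum root vector `E₂₁ = e₂e₁ - r⁻³e₁e₂`. -/
def E21 (d : G2 U) : U := d.e2 * d.e1 - (r ^ 3)⁻¹ • (d.e1 * d.e2)

end G2


lemma algMap_ne {p : MvPolynomial (Fin 2) ℚ} (h : MvPolynomial.eval ![2,1] p ≠ 0) :
    algebraMap (MvPolynomial (Fin 2) ℚ) K p ≠ 0 :=
  (map_ne_zero_iff _ (IsFractionRing.injective _ K)).mpr (fun h0 => h (by rw [h0]; simp))

lemma hr_ne : r ≠ 0 := algMap_ne (by simp)
lemma hs_ne : s ≠ 0 := algMap_ne (by simp)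
lemma hrs_ne : r - s ≠ 0 := by
  rw [r, s, ← map_sub]; exact algMap_ne (by simp; norm_num)
lemma hrs3_ne : r ^ 3 - s ^ 3 ≠ 0 := by
  rw [r, s, ← map_pow, ← map_pow, ← map_sub]; exact algMap_ne (by simp; norm_num)

lemma conj_swap {U : Type*} [Ring U] [Algebra K U] {ω : Uˣ} {x : U} {c : K} (hc : c ≠ 0)
    (h : (ω : U) * x * ((ω⁻¹ : Uˣ) : U) = c • x) : x * (ω : U) = c⁻¹ • ((ω : U) * x) := by
  have h1 : (ω : U) * x = c • (x * (ω : U)) := by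
    have := congrArg (· * (ω : U)) h
    simpa [mul_assoc, Units.inv_mul, smul_mul_assoc] using this
  rw [h1, smul_smul, inv_mul_cancel₀ hc, one_smul]

lemma stmt4_general {F U : Type*} [Field F] [Ring U] [Algebra F U] (rr ss : F)
    (e1 e2 f1 f2 w1 w2 w1' w2' : U)
    (hrs : rr - ss ≠ 0) (hrs3 : rr ^ 3 - ss ^ 3 ≠ 0) (hr : rr ≠ 0) (hs : ss ≠ 0)
    (A1 : f2 * w1 = (ss ^ 3) • (w1 * f2)) (A2 : f2 * w1' = (rr ^ 3) • (w1' * f2))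
    (B1 : f1 * w2 = (rr ^ 3)⁻¹ • (w2 * f1)) (B2 : f1 * w2' = (ss ^ 3)⁻¹ • (w2' * f1))
    (C1 : e2 * w1 = (ss ^ 3)⁻¹ • (w1 * e2)) (C2 : e2 * w1' = (rr ^ 3)⁻¹ • (w1' * e2))
    (D1 : e1 * w2 = (rr ^ 3) • (w2 * e1)) (D2 : e1 * w2' = (ss ^ 3) • (w2' * e1))
    (h4a : e1 * f1 - f1 * e1 = (rr - ss)⁻¹ • (w1 - w1'))
    (h4b : e2 * f2 - f2 * e2 = (rr ^ 3 - ss ^ 3)⁻¹ • (w2 - w2'))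
    (h4c : e1 * f2 = f2 * e1) (h4d : e2 * f1 = f1 * e2) :
    (e1 * (f2 * f1 - (rr ^ 3) • (f1 * f2)) - (f2 * f1 - (rr ^ 3) • (f1 * f2)) * e1
        = -((rr ^ 2 + rr * ss + ss ^ 2) • (w1 * f2)))
    ∧ (e2 * (f2 * f1 - (rr ^ 3) • (f1 * f2)) - (f2 * f1 - (rr ^ 3) • (f1 * f2)) * e2
        = f1 * w2')
    ∧ ((e1 * e2 - (ss ^ 3) • (e2 * e1)) * f1 - f1 * (e1 * e2 - (ss ^ 3) • (e2 * e1))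
        = -((rr ^ 2 + rr * ss + ss ^ 2) • (e2 * w1')))
    ∧ ((e1 * e2 - (ss ^ 3) • (e2 * e1)) * f2 - f2 * (e1 * e2 - (ss ^ 3) • (e2 * e1))
        = w2 * e1) := by
  have hef1 : e1 * f1 = f1 * e1 + (rr - ss)⁻¹ • (w1 - w1') := by rw [← h4a]; abel
  have hef1' : ∀ x : U, e1 * (f1 * x)
      = f1 * (e1 * x) + (rr - ss)⁻¹ • ((w1 - w1') * x) := fun x => by
    rw [← mul_assoc, hef1, add_mul, smul_mul_assoc, mul_assoc]
  have hef2 : e2 * f2 = f2 * e2 + (rr ^ 3 - ss ^ 3)⁻¹ • (w2 - w2') := by rw [← h4b]; abel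
  have hef2' : ∀ x : U, e2 * (f2 * x)
      = f2 * (e2 * x) + (rr ^ 3 - ss ^ 3)⁻¹ • ((w2 - w2') * x) := fun x => by
    rw [← mul_assoc, hef2, add_mul, smul_mul_assoc, mul_assoc]
  have hc : ∀ x : U, e1 * (f2 * x) = f2 * (e1 * x) := fun x => by
    rw [← mul_assoc, h4c, mul_assoc]
  have hd : ∀ x : U, e2 * (f1 * x) = f1 * (e2 * x) := fun x => by
    rw [← mul_assoc, h4d, mul_assoc]
  refine ⟨?_, ?_, ?_, ?_⟩ <;>
    simp only [mul_sub, sub_mul, mul_add, add_mul, smul_sub, smul_add,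
      smul_smul, smul_mul_assoc, mul_smul_comm, mul_assoc, h4c, h4d, hc, hd,
      hef1, hef1', hef2, hef2', A1, A2, B1, B2, C1, C2, D1, D2] <;>
    match_scalars <;>
    field_simp <;>
    ring

/-- In `U`: `[e₁,F₁₂] = -Δω₁f₂`, `[e₂,F₁₂] = f₁ω₂'`, `[E₁₂,f₁] = -Δe₂ω₁'`,
`[E₁₂,f₂] = ω₂e₁`. -/
theorem stmt4 {U : Type*} [Ring U] [Algebra K U] (d : G2 U) :
    (d.e1 * d.F12 - d.F12 * d.e1 = -(Δ • ((d.ω1 : U) * d.f2)))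
    ∧ (d.e2 * d.F12 - d.F12 * d.e2 = d.f1 * (d.ω2' : U))
    ∧ (d.E12 * d.f1 - d.f1 * d.E12 = -(Δ • (d.e2 * (d.ω1' : U))))
    ∧ (d.E12 * d.f2 - d.f2 * d.E12 = (d.ω2 : U) * d.e1) := by

  have hr3 : (r : K) ^ 3 ≠ 0 := pow_ne_zero _ hr_ne
  have hs3 : (s : K) ^ 3 ≠ 0 := pow_ne_zero _ hs_ne
  have A1 : d.f2 * (d.ω1 : U) = (s ^ 3) • ((d.ω1 : U) * d.f2) := by
    simpa using conj_swap (inv_ne_zero hs3) d.G2_d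
  have A2 : d.f2 * (d.ω1' : U) = (r ^ 3) • ((d.ω1' : U) * d.f2) := by
    simpa using conj_swap (inv_ne_zero hr3) d.G3_d
  have B1 : d.f1 * (d.ω2 : U) = (r ^ 3)⁻¹ • ((d.ω2 : U) * d.f1) := conj_swap hr3 d.G2_f
  have B2 : d.f1 * (d.ω2' : U) = (s ^ 3)⁻¹ • ((d.ω2' : U) * d.f1) := conj_swap hs3 d.G3_f
  have C1 : d.e2 * (d.ω1 : U) = (s ^ 3)⁻¹ • ((d.ω1 : U) * d.e2) := conj_swap hs3 d.G2_c
  have C2 : d.e2 * (d.ω1' : U) = (r ^ 3)⁻¹ • ((d.ω1' : U) * d.e2) := conj_swap hr3 d.G3_c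
  have D1 : d.e1 * (d.ω2 : U) = (r ^ 3) • ((d.ω2 : U) * d.e1) := by
    simpa using conj_swap (inv_ne_zero hr3) d.G2_e
  have D2 : d.e1 * (d.ω2' : U) = (s ^ 3) • ((d.ω2' : U) * d.e1) := by
    simpa using conj_swap (inv_ne_zero hs3) d.G3_e
  have main := stmt4_general r s d.e1 d.e2 d.f1 d.f2
    (d.ω1 : U) (d.ω2 : U) (d.ω1' : U) (d.ω2' : U)
    hrs_ne hrs3_ne hr_ne hs_ne A1 A2 B1 B2 C1 C2 D1 D2
    d.G4_a d.G4_b d.G4_c d.G4_d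
  obtain ⟨m1, m2, m3, m4⟩ := main
  refine ⟨?_, ?_, ?_, ?_⟩ <;> simp only [G2.F12, G2.E12, Δ]
  · exact m1
  · exact m2
  · exact m3
  · exact m4
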